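/- Let p ≥ 1, q = exp(πi/(2p+1)), and r an odd integer with gcd(r, 2p+1) = 1. The p×p real matrix G with entries G_{ij} = (-1)^{(i-1)(j-1)} · (2/√(2p+1)) · sin(π r i j/(2p+1)) for 1 ≤ i,j ≤ p is orthogonal. -/

import Mathlib

/-! With `N = 2p + 1` and `s = r (p + 1)`, adding `π r (i + 1) (j + 1)` (an odd multiple of `π`
exactly when `(i + 1) (j + 1)` is odd) to the angle shows that `G` is the sine matrix
`(2 / √N) sin (2π s (i + 1) (j + 1) / N)` multiplied on both sides by diagonal sign matrices.
Since `2 (p + 1) = N + 1`, `s` is coprime to `N`, and by product-to-sum the orthogonality of the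
sine matrix reduces to `∑_{k=1}^{p} cos (2π u k / N)`, which is `p` if `N ∣ u` and `-1/2`
otherwise: multiplied by `2 sin (π u / N)` the sum telescopes to `sin (π u) - sin (π u / N)`. -/

open Real Finset

theorem two_mul_sin_half_mul_sum_range_cos (x : ℝ) (n : ℕ) :
    2 * sin (x / 2) * ∑ k ∈ range n, cos ((k + 1) * x) =
      sin ((2 * n + 1) * x / 2) - sin (x / 2) := by
  induction n with
  | zero => simp
  | succ n ih =>
    rw [sum_range_succ, mul_add, ih]
    have h₁ : (2 * n + 1) * x / 2 = (n + 1) * x - x / 2 := by ring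
    have h₂ : (2 * ((n + 1 : ℕ) : ℝ) + 1) * x / 2 = (n + 1) * x + x / 2 := by push_cast; ring
    rw [h₁, h₂, sin_sub, sin_add]
    ring

theorem sum_range_cos_two_pi_mul_div (n : ℕ) (u : ℤ) :
    ∑ k ∈ range n, cos (2 * π * u * (k + 1) / (2 * n + 1)) =
      if (2 * n + 1 : ℤ) ∣ u then (n : ℝ) else -1 / 2 := by
  have hN : (2 * n + 1 : ℝ) ≠ 0 := by positivity
  split_ifs with hu
  · obtain ⟨t, rfl⟩ := hu
    have hterm (k : ℕ) : cos (2 * π * ((2 * n + 1) * t : ℤ) * (k + 1) / (2 * n + 1)) = 1 := by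
      convert cos_int_mul_two_pi (t * (k + 1)) using 2
      push_cast
      field_simp
    rw [sum_congr rfl fun k _ ↦ hterm k]
    simp
  · set x := 2 * π * u / (2 * n + 1)
    have hsin : sin (x / 2) ≠ 0 := by
      rw [Ne, sin_eq_zero_iff]
      rintro ⟨m, hm⟩
      apply hu
      refine ⟨m, ?_⟩
      have : (u : ℝ) = (2 * n + 1) * m := by
        simp only [x] at hm; field_simp at hm; linarith
      exact_mod_cast this
    have htop : sin ((2 * n + 1) * x / 2) = 0 := by
      rw [show (2 * n + 1) * x / 2 = u * π by simp only [x]; field_simp]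
      exact sin_int_mul_pi u
    have htelescope := two_mul_sin_half_mul_sum_range_cos x n
    rw [htop] at htelescope
    have hangle (k : ℕ) : 2 * π * u * (k + 1) / (2 * n + 1) = (k + 1) * x := by
      simp only [x]; ring
    simp only [hangle]
    apply mul_left_cancel₀ (mul_ne_zero two_ne_zero hsin)
    linear_combination htelescope

theorem sum_range_sin_mul_sin (n : ℕ) {s : ℤ} (hs : IsCoprime (2 * n + 1 : ℤ) s) {a b : ℕ}
    (ha : a < n) (hb : b < n) :
    ∑ k ∈ range n, sin (2 * π * s * (a + 1) * (k + 1) / (2 * n + 1)) *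
        sin (2 * π * s * (b + 1) * (k + 1) / (2 * n + 1)) =
      if a = b then (2 * n + 1 : ℝ) / 4 else 0 := by
  have hterm (k : ℕ) : sin (2 * π * s * (a + 1) * (k + 1) / (2 * n + 1)) *
        sin (2 * π * s * (b + 1) * (k + 1) / (2 * n + 1)) =
      (cos (2 * π * (s * (a - b) : ℤ) * (k + 1) / (2 * n + 1)) -
        cos (2 * π * (s * (a + b + 2) : ℤ) * (k + 1) / (2 * n + 1))) / 2 := by
    set A := 2 * π * s * (a + 1) * (k + 1) / (2 * n + 1)
    set B := 2 * π * s * (b + 1) * (k + 1) / (2 * n + 1)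
    rw [show 2 * π * (s * (a - b) : ℤ) * (k + 1) / (2 * n + 1) = A - B by push_cast; ring,
      show 2 * π * (s * (a + b + 2) : ℤ) * (k + 1) / (2 * n + 1) = A + B by push_cast; ring,
      cos_sub, cos_add]
    ring
  have hsum : ¬ (2 * n + 1 : ℤ) ∣ s * (a + b + 2) := fun h ↦ by
    have := Int.le_of_dvd (by positivity) (hs.dvd_of_dvd_mul_left h)
    omega
  have hdiff : (2 * n + 1 : ℤ) ∣ s * (a - b) ↔ a = b := by
    refine ⟨fun h ↦ ?_, fun h ↦ by simp [h]⟩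
    have := Int.eq_zero_of_abs_lt_dvd (hs.dvd_of_dvd_mul_left h) (by rw [abs_lt]; omega)
    omega
  rw [sum_congr rfl fun k _ ↦ hterm k, ← sum_div, sum_sub_distrib, sum_range_cos_two_pi_mul_div,
    sum_range_cos_two_pi_mul_div, if_neg hsum]
  simp only [hdiff]
  split_ifs <;> ring

theorem neg_one_pow_mul_sin_pi_mul_div (n : ℕ) {r : ℤ} (hr : Odd r) (i j : ℕ) :
    (-1 : ℝ) ^ (i * j) * sin (π * r * (i + 1) * (j + 1) / (2 * n + 1)) =
      (-1) ^ (i + 1) * sin (2 * π * (r * (n + 1) : ℤ) * (i + 1) * (j + 1) / (2 * n + 1)) *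
        (-1) ^ j := by
  have hangle : 2 * π * (r * (n + 1) : ℤ) * (i + 1) * (j + 1) / (2 * n + 1) =
      π * r * (i + 1) * (j + 1) / (2 * n + 1) + (r * ((i + 1) * (j + 1) : ℕ) : ℤ) * π := by
    push_cast
    field_simp
    ring
  have hsign : (-1 : ℝ) ^ (i + 1) * (-1) ^ ((i + 1) * (j + 1)) * (-1) ^ j = (-1) ^ (i * j) := by
    rw [← pow_add, ← pow_add,
      show i + 1 + (i + 1) * (j + 1) + j = i * j + 2 * (i + j + 1) by ring, pow_add, pow_mul]
    norm_num
  rw [hangle, sin_add_int_mul_pi, zpow_mul, hr.neg_one_zpow, zpow_natCast, ← hsign]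
  ring

open Matrix

theorem diagonal_neg_one_pow_mem_orthogonalGroup {ι R : Type*} [Fintype ι] [DecidableEq ι]
    [CommRing R] (e : ι → ℕ) :
    diagonal (fun i ↦ (-1 : R) ^ e i) ∈ orthogonalGroup ι R := by
  rw [mem_orthogonalGroup_iff, diagonal_transpose, diagonal_mul_diagonal, ← diagonal_one]
  simp [← mul_pow]

noncomputable def sineMatrix (n : ℕ) (s : ℤ) : Matrix (Fin n) (Fin n) ℝ := fun i j ↦
  2 / √(2 * n + 1) * sin (2 * π * s * ((i : ℕ) + 1) * ((j : ℕ) + 1) / (2 * n + 1))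

theorem sineMatrix_mem_orthogonalGroup (n : ℕ) {s : ℤ} (hs : IsCoprime (2 * n + 1 : ℤ) s) :
    sineMatrix n s ∈ orthogonalGroup (Fin n) ℝ := by
  rw [mem_orthogonalGroup_iff]
  ext i j
  have hc : 2 / √(2 * n + 1) * (2 / √(2 * n + 1)) = 4 / (2 * n + 1 : ℝ) := by
    rw [div_mul_div_comm, mul_self_sqrt (by positivity)]
    norm_num
  simp only [mul_apply, one_apply, transpose_apply, sineMatrix, mul_mul_mul_comm _ (sin _), hc,
    ← mul_sum]
  rw [Fin.sum_univ_eq_sum_range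
      (fun k ↦ sin (2 * π * s * ((i : ℕ) + 1) * (k + 1) / (2 * n + 1)) *
        sin (2 * π * s * ((j : ℕ) + 1) * (k + 1) / (2 * n + 1))),
    sum_range_sin_mul_sin n hs i.isLt j.isLt]
  simp only [Fin.val_inj]
  split_ifs
  · field_simp
  · simp

theorem G_matrix_orthogonal_general (p : ℕ) (r : ℤ) (hr : Odd r)
    (hcop : Int.gcd r (2 * p + 1) = 1) :
    let G : Matrix (Fin p) (Fin p) ℝ := fun i j =>
      (-1 : ℝ) ^ ((i : ℕ) * (j : ℕ)) * (2 / Real.sqrt (2 * p + 1)) *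
        Real.sin (Real.pi * r * ((i : ℕ) + 1) * ((j : ℕ) + 1) / (2 * p + 1))
    G * G.transpose = 1 := by
  intro G
  have hG : G = diagonal (fun i : Fin p ↦ (-1 : ℝ) ^ ((i : ℕ) + 1)) *
      sineMatrix p (r * (p + 1)) * diagonal (fun i : Fin p ↦ (-1 : ℝ) ^ (i : ℕ)) := by
    ext i j
    simp only [G, mul_diagonal, diagonal_mul, sineMatrix]
    linear_combination 2 / √(2 * p + 1) * neg_one_pow_mul_sin_pi_mul_div p hr i j
  have hs : IsCoprime (2 * p + 1 : ℤ) (r * (p + 1)) :=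
    (Int.isCoprime_iff_gcd_eq_one.mpr hcop).symm.mul_right ⟨-1, 2, by ring⟩
  rw [← mem_orthogonalGroup_iff, hG]
  exact mul_mem (mul_mem (diagonal_neg_one_pow_mem_orthogonalGroup _)
    (sineMatrix_mem_orthogonalGroup p hs)) (diagonal_neg_one_pow_mem_orthogonalGroup _)

theorem G_matrix_orthogonal (p : ℕ) (hp : 1 ≤ p) (r : ℤ) (hr : Odd r)
    (hcop : Int.gcd r (2 * p + 1) = 1) :
    let G : Matrix (Fin p) (Fin p) ℝ := fun i j =>
      (-1 : ℝ) ^ ((i : ℕ) * (j : ℕ)) * (2 / Real.sqrt (2 * p + 1)) *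
        Real.sin (Real.pi * r * ((i : ℕ) + 1) * ((j : ℕ) + 1) / (2 * p + 1))
    G * G.transpose = 1 :=
  G_matrix_orthogonal_general p r hr hcop
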